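/- Let $\nu$ be a Lévy measure on $\mathbb{R}^d$ (i.e. $\nu(\{0\})=0$ and $\int_{|z|\le 1}|z|^2\,\nu(dz)<\infty$) with $\int_{|z|\le 1}|z|\,\nu(dz)<\infty$, and define $h(x) = \int_{|z|>x}\nu(dz) + x^{-2}\int_{|z|\le x}|z|^2\,\nu(dz) + x^{-1}\left|\int_{|z|\le x} \frac{z|z|^2}{1+|z|^2}\,\nu(dz)\right|$ for $x>0$. Let $\beta_0 = \inf\{\eta>0 : \int_{|z|\le 1}|z|^{\eta}\,\nu(dz)<\infty\}$ be the Blumenthal–Getoor index. Then for every $\varepsilon>0$, $\lim_{x\to 0^+} x^{\beta_0+\varepsilon} h(x) = 0$. -/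

import Mathlib

open MeasureTheory Filter Set

/-!
If `∫_{‖z‖ ≤ 1} ‖z‖^η dν < ∞` for some `η ≤ 2`, then on `0 < x ≤ 1` each of the three terms
of the Pruitt function is `O(x^{-η})`: the tail by Markov's inequality for `‖z‖^η` (plus the
finite mass outside the unit ball), the second moment since `‖z‖² ≤ x^{2-η} ‖z‖^η` on
`‖z‖ ≤ x`, and the drift term since it is bounded by the second moment. Taking `η` in
`(0, β₀ + ε)` then gives `x^{β₀+ε} h(x) = O(x^{β₀+ε-η}) → 0`.
-/

lemma tendsto_rpow_nhdsGT_zero {r : ℝ} (hr : 0 < r) :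
    Tendsto (fun x : ℝ => x ^ r) (nhdsWithin 0 (Ioi 0)) (nhds 0) := by
  have h := (Real.continuousAt_rpow_const 0 r (.inr hr.le)).tendsto
  rw [Real.zero_rpow hr.ne'] at h
  exact h.mono_left nhdsWithin_le_nhds

lemma norm_sq_le_rpow_mul_norm_rpow {E : Type*} [SeminormedAddCommGroup E] {η x : ℝ}
    (hη2 : η ≤ 2) {z : E} (hz : ‖z‖ ≤ x) :
    ‖z‖ ^ 2 ≤ x ^ (2 - η) * ‖z‖ ^ η := by
  calc ‖z‖ ^ 2 = ‖z‖ ^ (2 - η) * ‖z‖ ^ η := by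
        rw [← Real.rpow_add' (norm_nonneg z) (by norm_num), sub_add_cancel, Real.rpow_two]
    _ ≤ x ^ (2 - η) * ‖z‖ ^ η := by gcongr

lemma measurableSet_norm_le {E : Type*} [SeminormedAddCommGroup E] [MeasurableSpace E]
    [OpensMeasurableSpace E] (r : ℝ) : MeasurableSet {z : E | ‖z‖ ≤ r} :=
  (isClosed_le continuous_norm continuous_const).measurableSet

section

variable {E : Type*} [NormedAddCommGroup E] [MeasurableSpace E] {ν : Measure E} {η x : ℝ}

noncomputable def blumenthalGetoorIndex (ν : Measure E) : ℝ :=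
  sInf {η : ℝ | 0 < η ∧ IntegrableOn (fun z => ‖z‖ ^ η) {z | ‖z‖ ≤ 1} ν}

lemma exists_integrableOn_rpow_lt_blumenthalGetoorIndex_add
    (hν1 : IntegrableOn (fun z => ‖z‖) {z | ‖z‖ ≤ 1} ν) {ε : ℝ} (hε : 0 < ε) :
    ∃ η, 0 < η ∧ η ≤ 1 ∧ IntegrableOn (fun z => ‖z‖ ^ η) {z | ‖z‖ ≤ 1} ν ∧
      η < blumenthalGetoorIndex ν + ε := by
  set S := {η : ℝ | 0 < η ∧ IntegrableOn (fun z => ‖z‖ ^ η) {z | ‖z‖ ≤ 1} ν}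
  have one_mem : (1 : ℝ) ∈ S := ⟨one_pos, by simpa using hν1⟩
  obtain ⟨η, ⟨hη0, hηint⟩, hηlt⟩ : ∃ η ∈ S, η < sInf S + ε :=
    exists_lt_of_csInf_lt ⟨1, one_mem⟩ (lt_add_of_pos_right _ hε)
  rcases le_total η 1 with hη1 | hη1
  · exact ⟨η, hη0, hη1, hηint, hηlt⟩
  · exact ⟨1, one_pos, le_rfl, one_mem.2, hη1.trans_lt hηlt⟩

section

variable [NormedSpace ℝ E]

noncomputable def pruitt (ν : Measure E) (x : ℝ) : ℝ :=
  (ν {z | x < ‖z‖}).toReal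
    + x ^ (-2 : ℝ) * (∫ z in {z | ‖z‖ ≤ x}, ‖z‖ ^ 2 ∂ν)
    + x⁻¹ * ‖∫ z in {z | ‖z‖ ≤ x}, (‖z‖ ^ 2 / (1 + ‖z‖ ^ 2)) • z ∂ν‖

lemma pruitt_nonneg (hx : 0 ≤ x) : 0 ≤ pruitt ν x := by
  unfold pruitt
  have : 0 ≤ ∫ z in {z | ‖z‖ ≤ x}, ‖z‖ ^ 2 ∂ν := integral_nonneg fun z => by positivity
  positivity

end

variable [OpensMeasurableSpace E]

lemma measureReal_norm_gt_le (hη : 0 ≤ η)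
    (hint : IntegrableOn (fun z => ‖z‖ ^ η) {z | ‖z‖ ≤ 1} ν) (htail : ν {z | 1 < ‖z‖} < ⊤)
    (hx : 0 < x) :
    ν.real {z | x < ‖z‖} ≤
      x ^ (-η) * ∫ z in {z | ‖z‖ ≤ 1}, ‖z‖ ^ η ∂ν + ν.real {z | 1 < ‖z‖} := by
  set A := {z : E | x ^ η ≤ ‖z‖ ^ η}
  have hxη : 0 < x ^ η := Real.rpow_pos_of_pos hx η
  have hA : ν (A ∩ {z | ‖z‖ ≤ 1}) < ⊤ := by
    rw [← Measure.restrict_apply' (measurableSet_norm_le 1)]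
    exact hint.measure_ge_lt_top hxη
  have markov : x ^ η * ν.real (A ∩ {z | ‖z‖ ≤ 1}) ≤ ∫ z in {z | ‖z‖ ≤ 1}, ‖z‖ ^ η ∂ν := by
    have h := mul_meas_ge_le_integral_of_nonneg (ae_of_all _ fun z => by positivity) hint (x ^ η)
    rwa [Measure.real, Measure.restrict_apply' (measurableSet_norm_le 1)] at h
  have hcover : {z : E | x < ‖z‖} ⊆ A ∩ {z | ‖z‖ ≤ 1} ∪ {z | 1 < ‖z‖} := fun z hz => by
    rcases le_or_gt ‖z‖ 1 with h1 | h1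
    · exact .inl ⟨Real.rpow_le_rpow hx.le (le_of_lt hz) hη, h1⟩
    · exact .inr h1
  calc ν.real {z | x < ‖z‖}
      ≤ ν.real (A ∩ {z | ‖z‖ ≤ 1}) + ν.real {z | 1 < ‖z‖} :=
        (measureReal_mono hcover (measure_union_lt_top hA htail).ne).trans
          (measureReal_union_le _ _)
    _ ≤ x ^ (-η) * ∫ z in {z | ‖z‖ ≤ 1}, ‖z‖ ^ η ∂ν + ν.real {z | 1 < ‖z‖} := by
        rw [Real.rpow_neg hx.le, ← div_eq_inv_mul]
        gcongr
        rwa [le_div_iff₀' hxη]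

lemma setIntegral_norm_sq_le (hη2 : η ≤ 2)
    (hint : IntegrableOn (fun z => ‖z‖ ^ η) {z | ‖z‖ ≤ 1} ν) (hx : 0 ≤ x) (hx1 : x ≤ 1) :
    ∫ z in {z | ‖z‖ ≤ x}, ‖z‖ ^ 2 ∂ν ≤ x ^ (2 - η) * ∫ z in {z | ‖z‖ ≤ 1}, ‖z‖ ^ η ∂ν := by
  have hsub : {z : E | ‖z‖ ≤ x} ⊆ {z | ‖z‖ ≤ 1} := fun z hz => le_trans hz hx1
  calc ∫ z in {z | ‖z‖ ≤ x}, ‖z‖ ^ 2 ∂ν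
      ≤ ∫ z in {z | ‖z‖ ≤ x}, x ^ (2 - η) * ‖z‖ ^ η ∂ν :=
        integral_mono_of_nonneg (ae_of_all _ fun z => by positivity)
          ((hint.mono_set hsub).const_mul _)
          ((ae_restrict_iff' (measurableSet_norm_le x)).2
            (ae_of_all _ fun z hz => norm_sq_le_rpow_mul_norm_rpow hη2 hz))
    _ = x ^ (2 - η) * ∫ z in {z | ‖z‖ ≤ x}, ‖z‖ ^ η ∂ν := integral_const_mul _ _
    _ ≤ x ^ (2 - η) * ∫ z in {z | ‖z‖ ≤ 1}, ‖z‖ ^ η ∂ν := mul_le_mul_of_nonneg_left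
        (setIntegral_mono_set hint (ae_of_all _ fun z => by positivity) hsub.eventuallyLE)
        (by positivity)

variable [NormedSpace ℝ E]

lemma norm_setIntegral_drift_le (hint : IntegrableOn (fun z => ‖z‖ ^ 2) {z | ‖z‖ ≤ x} ν) :
    ‖∫ z in {z | ‖z‖ ≤ x}, (‖z‖ ^ 2 / (1 + ‖z‖ ^ 2)) • z ∂ν‖ ≤
      x * ∫ z in {z | ‖z‖ ≤ x}, ‖z‖ ^ 2 ∂ν := by
  rw [← integral_const_mul]
  refine (norm_integral_le_integral_norm _).trans <|
    integral_mono_of_nonneg (ae_of_all _ fun z => norm_nonneg _) (hint.const_mul x) <|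
      (ae_restrict_iff' (measurableSet_norm_le x)).2 (ae_of_all _ fun z hz => ?_)
  have hz : ‖z‖ ≤ x := hz
  dsimp only
  rw [norm_smul, Real.norm_of_nonneg (by positivity)]
  calc ‖z‖ ^ 2 / (1 + ‖z‖ ^ 2) * ‖z‖ ≤ ‖z‖ ^ 2 * x := by
        gcongr
        exact div_le_self (by positivity) (le_add_of_nonneg_right (by positivity))
    _ = x * ‖z‖ ^ 2 := mul_comm _ _

lemma pruitt_le (hη0 : 0 ≤ η) (hη2 : η ≤ 2)
    (hν2 : IntegrableOn (fun z => ‖z‖ ^ 2) {z | ‖z‖ ≤ 1} ν)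
    (hint : IntegrableOn (fun z => ‖z‖ ^ η) {z | ‖z‖ ≤ 1} ν) (htail : ν {z | 1 < ‖z‖} < ⊤)
    (hx : 0 < x) (hx1 : x ≤ 1) :
    pruitt ν x ≤
      3 * (∫ z in {z | ‖z‖ ≤ 1}, ‖z‖ ^ η ∂ν) * x ^ (-η) + ν.real {z | 1 < ‖z‖} := by
  set C := ∫ z in {z | ‖z‖ ≤ 1}, ‖z‖ ^ η ∂ν
  set M := ∫ z in {z | ‖z‖ ≤ x}, ‖z‖ ^ 2 ∂ν
  have hM : M ≤ x ^ (2 - η) * C := setIntegral_norm_sq_le hη2 hint hx.le hx1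
  have hM0 : 0 ≤ M := integral_nonneg fun z => by positivity
  have hpow : x ^ (-2 : ℝ) * x ^ (2 - η) = x ^ (-η) := by
    rw [← Real.rpow_add hx]; ring_nf
  have second : x ^ (-2 : ℝ) * M ≤ C * x ^ (-η) :=
    calc x ^ (-2 : ℝ) * M ≤ x ^ (-2 : ℝ) * (x ^ (2 - η) * C) := by gcongr
      _ = C * x ^ (-η) := by rw [← mul_assoc, hpow, mul_comm]
  have third : x⁻¹ * ‖∫ z in {z | ‖z‖ ≤ x}, (‖z‖ ^ 2 / (1 + ‖z‖ ^ 2)) • z ∂ν‖ ≤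
      C * x ^ (-η) :=
    calc x⁻¹ * ‖∫ z in {z | ‖z‖ ≤ x}, (‖z‖ ^ 2 / (1 + ‖z‖ ^ 2)) • z ∂ν‖
        ≤ x⁻¹ * (x * M) := by
          gcongr
          exact norm_setIntegral_drift_le (hν2.mono_set fun z hz => le_trans hz hx1)
      _ = M := inv_mul_cancel_left₀ hx.ne' M
      _ ≤ x ^ (-2 : ℝ) * M := le_mul_of_one_le_left hM0 <|
          Real.one_le_rpow_of_pos_of_le_one_of_nonpos hx hx1 (by norm_num)
      _ ≤ C * x ^ (-η) := second
  have first := measureReal_norm_gt_le hη0 hint htail hx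
  unfold pruitt
  rw [← measureReal_def]
  linarith

lemma tendsto_rpow_mul_pruitt (hη0 : 0 ≤ η) (hη2 : η ≤ 2)
    (hν2 : IntegrableOn (fun z => ‖z‖ ^ 2) {z | ‖z‖ ≤ 1} ν)
    (hint : IntegrableOn (fun z => ‖z‖ ^ η) {z | ‖z‖ ≤ 1} ν) (htail : ν {z | 1 < ‖z‖} < ⊤)
    {p : ℝ} (hηp : η < p) :
    Tendsto (fun x => x ^ p * pruitt ν x) (nhdsWithin 0 (Ioi 0)) (nhds 0) := by
  set C := ∫ z in {z | ‖z‖ ≤ 1}, ‖z‖ ^ η ∂ν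
  set T := ν.real {z | 1 < ‖z‖}
  have hbound : Tendsto (fun x : ℝ => 3 * C * x ^ (p - η) + T * x ^ p)
      (nhdsWithin 0 (Ioi 0)) (nhds 0) := by
    simpa using ((tendsto_rpow_nhdsGT_zero (sub_pos.2 hηp)).const_mul (3 * C)).add
      ((tendsto_rpow_nhdsGT_zero (hη0.trans_lt hηp)).const_mul T)
  have hunit : ∀ᶠ x in nhdsWithin (0 : ℝ) (Ioi 0), x ∈ Ioo (0 : ℝ) 1 :=
    Ioo_mem_nhdsGT_of_mem ⟨le_rfl, one_pos⟩
  refine squeeze_zero' (hunit.mono fun x hx => ?_) (hunit.mono fun x hx => ?_) hbound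
  · exact mul_nonneg (Real.rpow_nonneg hx.1.le p) (pruitt_nonneg hx.1.le)
  · calc x ^ p * pruitt ν x ≤ x ^ p * (3 * C * x ^ (-η) + T) :=
          mul_le_mul_of_nonneg_left (pruitt_le hη0 hη2 hν2 hint htail hx.1 hx.2.le)
            (Real.rpow_nonneg hx.1.le p)
      _ = 3 * C * x ^ (p - η) + T * x ^ p := by
          rw [sub_eq_add_neg, Real.rpow_add hx.1]
          ring

end

theorem stmt0_general {d : ℕ} (ν : Measure (EuclideanSpace ℝ (Fin d)))
    (hν2 : IntegrableOn (fun z => ‖z‖ ^ 2) {z | ‖z‖ ≤ 1} ν)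
    (hνtail : ν {z | 1 < ‖z‖} < ⊤)
    (hν1 : IntegrableOn (fun z => ‖z‖) {z | ‖z‖ ≤ 1} ν)
    (h : ℝ → ℝ)
    (hdef : ∀ x > 0, h x = (ν {z | x < ‖z‖}).toReal
      + x ^ (-2 : ℝ) * (∫ z in {z | ‖z‖ ≤ x}, ‖z‖ ^ 2 ∂ν)
      + x⁻¹ * ‖∫ z in {z | ‖z‖ ≤ x}, (‖z‖ ^ 2 / (1 + ‖z‖ ^ 2)) • z ∂ν‖)
    (β₀ : ℝ)
    (hβ₀ : β₀ = sInf {η : ℝ | 0 < η ∧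
      IntegrableOn (fun z => ‖z‖ ^ η) {z | ‖z‖ ≤ 1} ν}) :
    ∀ ε > 0, Tendsto (fun x : ℝ => x ^ (β₀ + ε) * h x)
      (nhdsWithin 0 (Ioi 0)) (nhds 0) := by
  intro ε hε
  obtain ⟨η, hη0, hη1, hint, hηlt⟩ :=
    exists_integrableOn_rpow_lt_blumenthalGetoorIndex_add hν1 hε
  rw [blumenthalGetoorIndex, ← hβ₀] at hηlt
  have hh : (fun x => x ^ (β₀ + ε) * pruitt ν x) =ᶠ[nhdsWithin 0 (Ioi 0)]
      fun x => x ^ (β₀ + ε) * h x :=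
    eventually_mem_nhdsWithin.mono fun x hx => by dsimp only; rw [hdef x hx, pruitt]
  exact (tendsto_rpow_mul_pruitt hη0.le (by linarith) hν2 hint hνtail hηlt).congr' hh

/-- Upper bound for the Blumenthal–Getoor index of the Pruitt function `h`. -/
theorem stmt0 {d : ℕ} (ν : Measure (EuclideanSpace ℝ (Fin d)))
    (hν0 : ν {0} = 0)
    (hν2 : IntegrableOn (fun z => ‖z‖ ^ 2) {z | ‖z‖ ≤ 1} ν)
    (hνtail : ν {z | 1 < ‖z‖} < ⊤)
    (hν1 : IntegrableOn (fun z => ‖z‖) {z | ‖z‖ ≤ 1} ν)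
    (h : ℝ → ℝ)
    (hdef : ∀ x > 0, h x = (ν {z | x < ‖z‖}).toReal
      + x ^ (-2 : ℝ) * (∫ z in {z | ‖z‖ ≤ x}, ‖z‖ ^ 2 ∂ν)
      + x⁻¹ * ‖∫ z in {z | ‖z‖ ≤ x}, (‖z‖ ^ 2 / (1 + ‖z‖ ^ 2)) • z ∂ν‖)
    (β₀ : ℝ)
    (hβ₀ : β₀ = sInf {η : ℝ | 0 < η ∧
      IntegrableOn (fun z => ‖z‖ ^ η) {z | ‖z‖ ≤ 1} ν}) :
    ∀ ε > 0, Tendsto (fun x : ℝ => x ^ (β₀ + ε) * h x)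
      (nhdsWithin 0 (Ioi 0)) (nhds 0) :=
  stmt0_general ν hν2 hνtail hν1 h hdef β₀ hβ₀
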